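/- Let n ≥ 3 and Γ̃ = {z ∈ ℂ^{n+1} : Re z_1 > 0 and Re z_{n+1} = (Re z_1)(Re z_2) + (Re z_1) Σ_{j=3}^n (Re z_j)²}. Fix j with 3 ≤ j ≤ n. For every θ ∈ ℝ, the holomorphic map which sends z_2 to z_2 − (e^{2iθ} − 1) z_j² / 2, sends z_j to e^{iθ} z_j, and leaves all other coordinates unchanged, maps Γ̃ bijectively onto Γ̃ and fixes the point p₀ = (1, 0, …, 0). -/
import Mathlib


lemma key_re (θ : ℝ) (w : ℂ) :
    ((Complex.exp ((θ:ℂ) * Complex.I) * w).re)^2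
      = (w.re)^2 + ((Complex.exp (2*(θ:ℂ)*Complex.I) - 1) * w^2).re / 2 := by
  rw [show (2*(θ:ℂ)*Complex.I) = (((2*θ:ℝ):ℂ))*Complex.I by push_cast; ring,
    Complex.exp_mul_I, Complex.exp_mul_I, pow_two w,
    show Complex.cos ((2*θ:ℝ):ℂ) = ((Real.cos (2*θ) : ℝ):ℂ) by rw [Complex.ofReal_cos],
    show Complex.sin ((2*θ:ℝ):ℂ) = ((Real.sin (2*θ) : ℝ):ℂ) by rw [Complex.ofReal_sin],
    show Complex.cos ((θ:ℝ):ℂ) = ((Real.cos θ : ℝ):ℂ) by rw [Complex.ofReal_cos],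
    show Complex.sin ((θ:ℝ):ℂ) = ((Real.sin θ : ℝ):ℂ) by rw [Complex.ofReal_sin]]
  simp only [Complex.mul_re, Complex.sub_re, Complex.add_re, Complex.add_im,
    Complex.mul_im, Complex.sub_im, Complex.one_re, Complex.one_im,
    Complex.ofReal_re, Complex.ofReal_im, Complex.I_re, Complex.I_im]
  rw [Real.sin_two_mul θ, Real.cos_two_mul θ]
  linear_combination (w.im^2) * Real.sin_sq_add_cos_sq θ


/-- The tube hypersurface `Γ̃ = {z ∈ ℂ^{n+1} : Re z₁ > 0,
Re z_{n+1} = (Re z₁)(Re z₂) + (Re z₁) Σ_{j=3}^n (Re z_j)²}` (0-indexed coordinates). -/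
def tubeGamma (n : ℕ) (hn : 3 ≤ n) : Set (Fin (n + 1) → ℂ) :=
  {z | 0 < (z 0).re ∧ (z (Fin.last n)).re = (z 0).re * (z ⟨1, by omega⟩).re +
    (z 0).re * ∑ j : Fin (n + 1), (if 2 ≤ (j : ℕ) ∧ (j : ℕ) < n then (z j).re ^ 2 else 0)}

/-- The holomorphic map sending `z₂ ↦ z₂ − (e^{2iθ} − 1) z_j² / 2`, `z_j ↦ e^{iθ} z_j`,
and leaving all other coordinates unchanged (`j` is the 0-based index of one of the
coordinates `z₃, …, z_n`, i.e. `2 ≤ j < n`). -/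
noncomputable def PsiTheta (n : ℕ) (j : Fin (n + 1)) (θ : ℝ) (z : Fin (n + 1) → ℂ) :
    Fin (n + 1) → ℂ := fun i =>
  if (i : ℕ) = 1 then z i - (Complex.exp (2 * (θ : ℂ) * Complex.I) - 1) * (z j) ^ 2 / 2
  else if i = j then Complex.exp ((θ : ℂ) * Complex.I) * z i
  else z i

lemma PsiTheta_apply_one (n : ℕ) (hn : 3 ≤ n) (j : Fin (n + 1)) (θ : ℝ) (z : Fin (n + 1) → ℂ) :
    PsiTheta n j θ z ⟨1, by omega⟩ =
      z ⟨1, by omega⟩ - (Complex.exp (2 * (θ : ℂ) * Complex.I) - 1) * (z j) ^ 2 / 2 := by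
  simp [PsiTheta]

lemma PsiTheta_apply_j (n : ℕ) (j : Fin (n + 1)) (hj : 2 ≤ (j : ℕ)) (θ : ℝ)
    (z : Fin (n + 1) → ℂ) :
    PsiTheta n j θ z j = Complex.exp ((θ : ℂ) * Complex.I) * z j := by
  simp only [PsiTheta]
  rw [if_neg (by omega : ¬ ((j:ℕ) = 1))]
  simp

lemma PsiTheta_apply_other (n : ℕ) (j : Fin (n + 1)) (θ : ℝ) (z : Fin (n + 1) → ℂ)
    (i : Fin (n + 1)) (h1 : (i : ℕ) ≠ 1) (h2 : i ≠ j) :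
    PsiTheta n j θ z i = z i := by
  simp only [PsiTheta]
  rw [if_neg h1, if_neg h2]

lemma PsiTheta_comp (n : ℕ) (j : Fin (n + 1)) (hj : 2 ≤ (j : ℕ)) (θ φ : ℝ)
    (z : Fin (n + 1) → ℂ) :
    PsiTheta n j θ (PsiTheta n j φ z) = PsiTheta n j (θ + φ) z := by
  funext i
  by_cases h1 : (i : ℕ) = 1
  · simp only [PsiTheta, h1, if_pos]
    have : Complex.exp ((φ:ℂ) * Complex.I) ^ 2 = Complex.exp (2 * (φ:ℂ) * Complex.I) := by
      rw [← Complex.exp_nat_mul]; ring_nf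
    rw [if_neg (by omega : ¬ ((j:ℕ) = 1))]
    rw [show ((θ + φ : ℝ) : ℂ) = (θ:ℂ) + (φ:ℂ) by push_cast; ring]
    rw [mul_pow, this, show (2 * ((θ:ℂ) + (φ:ℂ)) * Complex.I)
      = 2 * (θ:ℂ) * Complex.I + 2 * (φ:ℂ) * Complex.I by ring, Complex.exp_add]
    ring
  · by_cases h2 : i = j
    · subst h2
      rw [PsiTheta_apply_j n i hj, PsiTheta_apply_j n i hj, PsiTheta_apply_j n i hj,
        ← mul_assoc, ← Complex.exp_add]
      push_cast; ring_nf
    · rw [PsiTheta_apply_other n j θ _ i h1 h2, PsiTheta_apply_other n j φ z i h1 h2,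
        PsiTheta_apply_other n j _ z i h1 h2]

lemma PsiTheta_zero (n : ℕ) (j : Fin (n + 1)) (z : Fin (n + 1) → ℂ) :
    PsiTheta n j 0 z = z := by
  funext i
  simp [PsiTheta]

lemma PsiTheta_mapsTo (n : ℕ) (hn : 3 ≤ n) (j : Fin (n + 1))
    (hj : 2 ≤ (j : ℕ)) (hj' : (j : ℕ) < n) (θ : ℝ) :
    Set.MapsTo (PsiTheta n j θ) (tubeGamma n hn) (tubeGamma n hn) := by
  intro z hz
  obtain ⟨h1, h2⟩ := hz
  have e0 : PsiTheta n j θ z 0 = z 0 :=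
    PsiTheta_apply_other n j θ z 0 (by simp) (fun h => by simp [Fin.ext_iff] at h; omega)
  have elast : PsiTheta n j θ z (Fin.last n) = z (Fin.last n) :=
    PsiTheta_apply_other n j θ z (Fin.last n) (by simp; omega)
      (fun h => by simp [Fin.ext_iff] at h; omega)
  constructor
  · rw [e0]; exact h1
  · rw [e0, elast, PsiTheta_apply_one n hn j θ z]
    have hsum : (∑ i : Fin (n+1), (if 2 ≤ (i : ℕ) ∧ (i : ℕ) < n
          then ((PsiTheta n j θ z i).re) ^ 2 else 0))
        - (∑ i : Fin (n+1), (if 2 ≤ (i : ℕ) ∧ (i : ℕ) < n then ((z i).re) ^ 2 else 0))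
        = ((Complex.exp ((θ:ℂ) * Complex.I) * z j).re) ^ 2 - ((z j).re) ^ 2 := by
      rw [← Finset.sum_sub_distrib]
      rw [Finset.sum_eq_single_of_mem j (Finset.mem_univ j)]
      · rw [if_pos ⟨hj, hj'⟩, if_pos ⟨hj, hj'⟩, PsiTheta_apply_j n j hj]
      · intro i _ hij
        by_cases hc : 2 ≤ (i : ℕ) ∧ (i : ℕ) < n
        · rw [if_pos hc, if_pos hc, PsiTheta_apply_other n j θ z i (by omega) hij, sub_self]
        · rw [if_neg hc, if_neg hc, sub_self]
    have hkey := key_re θ (z j)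
    have hsub : (z ⟨1, by omega⟩ - (Complex.exp (2 * (θ:ℂ) * Complex.I) - 1) * (z j) ^ 2 / 2).re
        = (z ⟨1, by omega⟩).re - ((Complex.exp (2 * (θ:ℂ) * Complex.I) - 1) * (z j) ^ 2).re / 2 := by
      rw [Complex.sub_re]
      congr 1
      rw [show ((Complex.exp (2 * (θ:ℂ) * Complex.I) - 1) * (z j) ^ 2 / 2)
        = ((Complex.exp (2 * (θ:ℂ) * Complex.I) - 1) * (z j) ^ 2) / ((2:ℝ):ℂ) by norm_num]
      rw [Complex.div_ofReal_re]
    rw [hsub]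
    have := sub_eq_iff_eq_add.mp hsum
    rw [this]
    rw [h2]
    linear_combination (-(z 0).re) * hkey


/-- For every `θ ∈ ℝ`, the map `PsiTheta` maps `Γ̃` bijectively onto `Γ̃` and fixes
`p₀ = (1, 0, …, 0)`. -/
theorem PsiTheta_bijOn_tubeGamma (n : ℕ) (hn : 3 ≤ n) (j : Fin (n + 1))
    (hj : 2 ≤ (j : ℕ)) (hj' : (j : ℕ) < n) (θ : ℝ) :
    Set.BijOn (PsiTheta n j θ) (tubeGamma n hn) (tubeGamma n hn) ∧
    PsiTheta n j θ (fun i => if (i : ℕ) = 0 then 1 else 0) =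
      (fun i : Fin (n + 1) => if (i : ℕ) = 0 then (1 : ℂ) else 0) := by
  constructor
  · have hinv : ∀ z, PsiTheta n j (-θ) (PsiTheta n j θ z) = z := by
      intro z
      rw [PsiTheta_comp n j hj, neg_add_cancel, PsiTheta_zero]
    have hinv' : ∀ z, PsiTheta n j θ (PsiTheta n j (-θ) z) = z := by
      intro z
      rw [PsiTheta_comp n j hj, add_neg_cancel, PsiTheta_zero]
    exact Set.InvOn.bijOn ⟨fun z _ => hinv z, fun z _ => hinv' z⟩
      (PsiTheta_mapsTo n hn j hj hj' θ) (PsiTheta_mapsTo n hn j hj hj' (-θ))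
  · funext i
    by_cases h1 : (i : ℕ) = 1
    · simp only [PsiTheta, h1, if_pos]
      rw [if_neg (by omega : (j:ℕ) ≠ 0), if_neg (by omega : ¬ ((1:ℕ) = 0))]
      ring
    · by_cases h2 : i = j
      · subst h2
        rw [PsiTheta_apply_j n i hj]
        rw [if_neg (by omega : ¬ ((i:ℕ) = 0))]
        simp
      · rw [PsiTheta_apply_other n j θ _ i h1 h2]
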